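/- Let n ≥ 1 and let F be a facet of Δ(n) with elements listed in increasing order as v_1, …, v_r, where v_ℓ = (i_ℓ, j_ℓ, k_ℓ). Fix ℓ with 1 ≤ ℓ ≤ r and a coordinate position a ∈ {first, second, third} such that a_{ℓ+1} - a_ℓ > 1 if ℓ < r, or a_r < n if ℓ = r (where a_m denotes the a-coordinate of v_m). Let v' be the triple obtained from v_ℓ by increasing its a-coordinate by 1, and let G = (F \ {v_ℓ}) ∪ {v'}. Suppose the up-twist is safe, i.e.: if ℓ > 1, then min over the three coordinates of (v' minus v_{ℓ-1}) equals 1; and if ℓ = 1, then the minimum coordinate of v' equals 1. Then G is a facet of Δ(n). -/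

import Mathlib

/-- Vertices of `Δ(n)`: integer triples. -/
abbrev V : Type := ℕ × ℕ × ℕ

/-- The strict componentwise order on triples. -/
def slt (u v : V) : Prop := u.1 < v.1 ∧ u.2.1 < v.2.1 ∧ u.2.2 < v.2.2

/-- A face of `Δ(n)`: a finite subset of `{1,…,n}³` that is a chain under `slt`. -/
def IsFace (n : ℕ) (F : Finset V) : Prop :=
  (∀ v ∈ F, v.1 ∈ Finset.Icc 1 n ∧ v.2.1 ∈ Finset.Icc 1 n ∧ v.2.2 ∈ Finset.Icc 1 n) ∧
  (∀ u ∈ F, ∀ v ∈ F, u ≠ v → slt u v ∨ slt v u)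

/-- A facet of `Δ(n)`: an inclusion-maximal face. -/
def IsFacet (n : ℕ) (F : Finset V) : Prop :=
  IsFace n F ∧ ∀ G : Finset V, IsFace n G → F ⊆ G → F = G

/-- The `a`-th coordinate of a triple. -/
def coord (a : Fin 3) (v : V) : ℕ := ![v.1, v.2.1, v.2.2] a

/-- Replace the `a`-th coordinate of a triple by `x`. -/
def setCoord (a : Fin 3) (x : ℕ) (v : V) : V :=
  if a = 0 then (x, v.2.1, v.2.2) else if a = 1 then (v.1, x, v.2.2) else (v.1, v.2.1, x)


/-!
Twisting `v = v_ℓ` up to `v'` keeps a chain: everything below `v` stays below `v'`, and the gap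
condition leaves room for `v'` below `v_{ℓ+1}`.  For maximality, let `w` extend the new chain.
If `w` is comparable with `v`, then `w` extends the facet `F` and so lies in it.  Otherwise `w`
cannot lie above `v'`, so `v_{ℓ-1} < w < v'`, which forces every coordinate of `v' - v_{ℓ-1}`
to be at least `2`, against safety.  For `ℓ = 0` the origin plays the role of `v_{ℓ-1}`.
-/

instance : IsStrictOrder V slt where
  irrefl _ h := lt_irrefl _ h.1
  trans _ _ _ h₁ h₂ := ⟨h₁.1.trans h₂.1, h₁.2.1.trans h₂.2.1, h₁.2.2.trans h₂.2.2⟩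

theorem List.Pairwise.exists_getElem_succ_eq_or_rel {α : Type*} {r : α → α → Prop}
    [IsStrictOrder α r] {L : List α} (hL : L.Pairwise r) {i : ℕ} (hi : i < L.length)
    {u : α} (hu : u ∈ L) (h : r L[i] u) : ∃ h : i + 1 < L.length, L[i + 1] = u ∨ r L[i + 1] u := by
  obtain ⟨m, hm, rfl⟩ := List.getElem_of_mem hu
  have hpair := List.pairwise_iff_getElem.mp hL
  have him : i < m := by
    by_contra! hmi
    rcases hmi.eq_or_lt with rfl | hmi
    · exact irrefl _ h
    · exact irrefl _ (_root_.trans h (hpair m i hm hi hmi))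
  refine ⟨by omega, ?_⟩
  rcases (Nat.succ_le_of_lt him).eq_or_lt with hm' | hm'
  · exact Or.inl (by subst hm'; rfl)
  · exact Or.inr (hpair _ _ _ _ hm')

theorem slt_iff_coord {u w : V} : slt u w ↔ ∀ b : Fin 3, coord b u < coord b w :=
  ⟨fun ⟨h₀, h₁, h₂⟩ b => by fin_cases b <;> assumption, fun h => ⟨h 0, h 1, h 2⟩⟩

abbrev upTwist (a : Fin 3) (v : V) : V := setCoord a (coord a v + 1) v

def minGap (u w : V) : ℕ := min (w.1 - u.1) (min (w.2.1 - u.2.1) (w.2.2 - u.2.2))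

theorem two_le_minGap_of_slt_of_slt {u w x : V} (huw : slt u w) (hwx : slt w x) :
    2 ≤ minGap u x := by
  obtain ⟨_, _, _⟩ := huw
  obtain ⟨_, _, _⟩ := hwx
  simp only [minGap, le_min_iff]
  omega

section UpTwist

variable {a b : Fin 3} {u v : V}

theorem coord_upTwist : coord b (upTwist a v) = if b = a then coord a v + 1 else coord b v := by
  fin_cases a <;> fin_cases b <;> simp [coord, setCoord]

theorem coord_upTwist_self : coord a (upTwist a v) = coord a v + 1 := by
  simp [coord_upTwist]

theorem coord_le_coord_upTwist : coord b v ≤ coord b (upTwist a v) := by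
  rw [coord_upTwist]
  split_ifs with h
  · subst h; omega
  · rfl

theorem slt_upTwist_of_slt (h : slt u v) : slt u (upTwist a v) :=
  slt_iff_coord.mpr fun b => (slt_iff_coord.mp h b).trans_le coord_le_coord_upTwist

theorem slt_of_upTwist_slt (h : slt (upTwist a v) u) : slt v u :=
  slt_iff_coord.mpr fun b => coord_le_coord_upTwist.trans_lt (slt_iff_coord.mp h b)

theorem upTwist_slt_of_slt (h : slt v u) (ha : coord a v + 1 < coord a u) :
    slt (upTwist a v) u := by
  refine slt_iff_coord.mpr fun b => ?_
  rw [coord_upTwist]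
  split_ifs with hb
  · exact hb ▸ ha
  · exact slt_iff_coord.mp h b

theorem upTwist_ne_self : upTwist a v ≠ v := fun h => by
  have := congrArg (coord a) h
  rw [coord_upTwist_self] at this
  omega

theorem not_slt_upTwist_self : ¬ slt v (upTwist a v) := by
  obtain ⟨b, hb⟩ : ∃ b : Fin 3, b ≠ a := by
    fin_cases a
    exacts [⟨1, by decide⟩, ⟨0, by decide⟩, ⟨0, by decide⟩]
  intro h
  have := slt_iff_coord.mp h b
  rw [coord_upTwist, if_neg hb] at this
  exact lt_irrefl _ this

theorem coord_upTwist_mem_Icc {n : ℕ} (hv : ∀ b, coord b v ∈ Finset.Icc 1 n)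
    (ha : coord a v < n) (b : Fin 3) : coord b (upTwist a v) ∈ Finset.Icc 1 n := by
  have := Finset.mem_Icc.mp (hv b)
  rw [coord_upTwist, Finset.mem_Icc]
  split_ifs with h
  · subst h; omega
  · exact this

end UpTwist

section Faces

variable {n : ℕ} {F G : Finset V} {u w : V}

theorem mem_Icc_coord_iff :
    (w.1 ∈ Finset.Icc 1 n ∧ w.2.1 ∈ Finset.Icc 1 n ∧ w.2.2 ∈ Finset.Icc 1 n) ↔
      ∀ b : Fin 3, coord b w ∈ Finset.Icc 1 n :=
  ⟨fun ⟨h₀, h₁, h₂⟩ b => by fin_cases b <;> assumption, fun h => ⟨h 0, h 1, h 2⟩⟩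

theorem IsFace.coord_mem_Icc (hF : IsFace n F) (hw : w ∈ F) (b : Fin 3) :
    coord b w ∈ Finset.Icc 1 n :=
  mem_Icc_coord_iff.mp (hF.1 w hw) b

theorem IsFace.zero_slt (hF : IsFace n F) (hw : w ∈ F) : slt 0 w :=
  slt_iff_coord.mpr fun b => by
    fin_cases b <;> exact (Finset.mem_Icc.mp (hF.coord_mem_Icc hw _)).1

theorem IsFace.mono (hF : IsFace n F) (hGF : G ⊆ F) : IsFace n G :=
  ⟨fun v hv => hF.1 v (hGF hv), fun u hu v hv => hF.2 u (hGF hu) v (hGF hv)⟩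

theorem IsFace.insert_of_forall_comparable (hF : IsFace n F) (hw : ∀ b, coord b w ∈ Finset.Icc 1 n)
    (hcmp : ∀ u ∈ F, u ≠ w → slt u w ∨ slt w u) : IsFace n (insert w F) := by
  refine ⟨fun v hv => ?_, fun u₁ h₁ u₂ h₂ hne => ?_⟩
  · rcases Finset.mem_insert.mp hv with rfl | hv
    exacts [mem_Icc_coord_iff.mpr hw, hF.1 v hv]
  rcases Finset.mem_insert.mp h₁ with rfl | hu₁ <;> rcases Finset.mem_insert.mp h₂ with rfl | hu₂
  · exact absurd rfl hne
  · exact (hcmp u₂ hu₂ hne.symm).symm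
  · exact hcmp u₁ hu₁ hne
  · exact hF.2 u₁ hu₁ u₂ hu₂ hne

theorem IsFacet.mem_of_forall_comparable (hF : IsFacet n F)
    (hw : ∀ b, coord b w ∈ Finset.Icc 1 n)
    (hcmp : ∀ u ∈ F, u ≠ w → slt u w ∨ slt w u) : w ∈ F := by
  rw [hF.2 _ (hF.1.insert_of_forall_comparable hw hcmp) (Finset.subset_insert w F)]
  exact Finset.mem_insert_self w F

end Faces

section Twisting

variable {n : ℕ} {F : Finset V} {a : Fin 3} {v : V}

theorem IsFace.insert_upTwist_erase (hF : IsFace n F) (hv : v ∈ F) (ha : coord a v < n)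
    (habove : ∀ u ∈ F, slt v u → coord a v + 1 < coord a u) :
    IsFace n (insert (upTwist a v) (F.erase v)) := by
  refine (hF.mono (Finset.erase_subset v F)).insert_of_forall_comparable
    (coord_upTwist_mem_Icc (hF.coord_mem_Icc hv) ha) fun u hu _ => ?_
  rcases hF.2 u (Finset.mem_of_mem_erase hu) v hv (Finset.ne_of_mem_erase hu) with h | h
  exacts [Or.inl (slt_upTwist_of_slt h),
    Or.inr (upTwist_slt_of_slt h (habove u (Finset.mem_of_mem_erase hu) h))]

theorem IsFacet.mem_insert_upTwist_erase (hF : IsFacet n F) (hv : v ∈ F) {p : V}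
    (hp : p = 0 ∨ p ∈ F) (hpv : slt p v) (hsafe : minGap p (upTwist a v) = 1)
    {H : Finset V} (hH : IsFace n H) (hGH : insert (upTwist a v) (F.erase v) ⊆ H)
    {w : V} (hw : w ∈ H) : w ∈ insert (upTwist a v) (F.erase v) := by
  have hv'H : upTwist a v ∈ H := hGH (Finset.mem_insert_self _ _)
  have herase : ∀ u ∈ F, u ≠ v → u ∈ H := fun u hu huv =>
    hGH (Finset.mem_insert_of_mem (Finset.mem_erase.mpr ⟨huv, hu⟩))
  have hwv : w ≠ v := by
    rintro rfl
    rcases hH.2 w hw _ hv'H upTwist_ne_self.symm with h | h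
    exacts [not_slt_upTwist_self h, irrefl w (slt_of_upTwist_slt h)]
  by_cases hcmp : slt w v ∨ slt v w
  · refine Finset.mem_insert_of_mem (Finset.mem_erase.mpr ⟨hwv,
      hF.mem_of_forall_comparable (hH.coord_mem_Icc hw) fun u hu huw => ?_⟩)
    by_cases huv : u = v
    · exact huv ▸ hcmp.symm
    · exact hH.2 u (herase u hu huv) w hw huw
  by_cases hwv' : w = upTwist a v
  · exact hwv' ▸ Finset.mem_insert_self _ _
  have hwv'_slt : slt w (upTwist a v) := by
    rcases hH.2 w hw _ hv'H hwv' with h | h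
    exacts [h, absurd (Or.inr (slt_of_upTwist_slt h)) hcmp]
  -- `w` is incomparable with `v`, hence cannot lie below `p < v`.
  have hpw : slt p w := by
    rcases hp with rfl | hpF
    · exact hH.zero_slt hw
    · rcases hH.2 p (herase p hpF (ne_of_irrefl hpv)) w hw (fun h => hcmp (Or.inl (h ▸ hpv)))
        with h | h
      exacts [h, absurd (Or.inl (_root_.trans h hpv)) hcmp]
  have := two_le_minGap_of_slt_of_slt hpw hwv'_slt
  omega

theorem IsFacet.insert_upTwist_erase (hF : IsFacet n F) (hv : v ∈ F) (ha : coord a v < n)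
    (habove : ∀ u ∈ F, slt v u → coord a v + 1 < coord a u) {p : V} (hp : p = 0 ∨ p ∈ F)
    (hpv : slt p v) (hsafe : minGap p (upTwist a v) = 1) :
    IsFacet n (insert (upTwist a v) (F.erase v)) :=
  ⟨hF.1.insert_upTwist_erase hv ha habove, fun _ hH hGH => (Finset.Subset.antisymm hGH
    fun _ hw => hF.mem_insert_upTwist_erase hv hp hpv hsafe hH hGH hw)⟩

end Twisting

/-- `ℓ` is a 0-based index into the increasing list `L` of `F`. -/
theorem safe_up_twist_is_facet (n : ℕ) (F : Finset V) (hF : IsFacet n F)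
    (L : List V) (hsort : L.Chain' slt) (htf : L.toFinset = F)
    (ℓ : ℕ) (hℓ : ℓ < L.length) (a : Fin 3) (v' : V)
    (hv' : v' = setCoord a (coord a (L.get ⟨ℓ, hℓ⟩) + 1) (L.get ⟨ℓ, hℓ⟩))
    (hgap_mid : ∀ h : ℓ + 1 < L.length,
      1 < coord a (L.get ⟨ℓ + 1, h⟩) - coord a (L.get ⟨ℓ, hℓ⟩))
    (hgap_last : ℓ + 1 = L.length → coord a (L.get ⟨ℓ, hℓ⟩) < n)
    (hsafe1 : ∀ h : 0 < ℓ,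
      min (v'.1 - (L.get ⟨ℓ - 1, by omega⟩).1)
        (min (v'.2.1 - (L.get ⟨ℓ - 1, by omega⟩).2.1)
          (v'.2.2 - (L.get ⟨ℓ - 1, by omega⟩).2.2)) = 1)
    (hsafe0 : ℓ = 0 → min v'.1 (min v'.2.1 v'.2.2) = 1) :
    IsFacet n (insert v' (F.erase (L.get ⟨ℓ, hℓ⟩))) := by
  subst hv' htf
  simp only [List.get_eq_getElem] at *
  have hpw : L.Pairwise slt := List.isChain_iff_pairwise.mp hsort
  have habove : ∀ u ∈ L.toFinset, slt L[ℓ] u → coord a L[ℓ] + 1 < coord a u := by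
    intro u hu hvu
    obtain ⟨h, hnext⟩ := hpw.exists_getElem_succ_eq_or_rel hℓ (List.mem_toFinset.mp hu) hvu
    have hle : coord a L[ℓ + 1] ≤ coord a u := by
      rcases hnext with rfl | hlt
      exacts [le_rfl, (slt_iff_coord.mp hlt a).le]
    have := hgap_mid h
    omega
  have ha : coord a L[ℓ] < n := by
    by_cases h : ℓ + 1 < L.length
    · have := hgap_mid h
      have := Finset.mem_Icc.mp
        (hF.1.coord_mem_Icc (List.mem_toFinset.mpr (L.getElem_mem h)) a)
      omega
    · exact hgap_last (by omega)
  have hvF : L[ℓ] ∈ L.toFinset := List.mem_toFinset.mpr (L.getElem_mem hℓ)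
  rcases Nat.eq_zero_or_pos ℓ with rfl | hpos
  · exact hF.insert_upTwist_erase hvF ha habove (Or.inl rfl) (hF.1.zero_slt hvF)
      (by simpa [minGap] using hsafe0 rfl)
  · exact hF.insert_upTwist_erase hvF ha habove
      (Or.inr (List.mem_toFinset.mpr (L.getElem_mem _)))
      (List.pairwise_iff_getElem.mp hpw _ _ _ hℓ (by omega)) (hsafe1 hpos)
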